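/- For every positive integer n there exists a finite subgroup G of O(3) × O(3) such that det(g) · det(h) = 1 for every (g, h) ∈ G, G is not contained in SO(3) × SO(3), G is isomorphic to ℤ/n × ℤ/2, and the componentwise action of G on S² × S² is pseudofree: for every (g, h) ∈ G with (g, h) ≠ (1, 1), the fixed-point set {(x, y) ∈ S² × S² : g x = x and h y = y} is finite. -/

import Mathlib

open Real Matrix


/-- The 3×3 real orthogonal group `O(3)`. -/
noncomputable abbrev O3 : Type := Matrix.orthogonalGroup (Fin 3) ℝ

/-- The subgroup `SO(3)` of the orthogonal group `O(3)`: 3×3 real orthogonal matrices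
of determinant 1. -/
noncomputable def SO3 : Subgroup (Matrix.orthogonalGroup (Fin 3) ℝ) where
  carrier := {A | ((A : Matrix (Fin 3) (Fin 3) ℝ)).det = 1}
  one_mem' := by simp
  mul_mem' := by
    intro a b ha hb
    rw [Set.mem_setOf_eq] at ha hb ⊢
    push_cast
    rw [Matrix.det_mul, ha, hb, mul_one]
  inv_mem' := by
    intro a ha
    rw [Set.mem_setOf_eq] at ha ⊢
    have h : ((a : Matrix (Fin 3) (Fin 3) ℝ)) *
        ((a⁻¹ : Matrix.orthogonalGroup (Fin 3) ℝ) : Matrix (Fin 3) (Fin 3) ℝ) = 1 := by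
      rw [← MulMemClass.coe_mul, mul_inv_cancel, OneMemClass.coe_one]
    have := congrArg Matrix.det h
    rw [Matrix.det_mul, ha, one_mul, Matrix.det_one] at this
    exact this

/-- The matrix underlying an element of `O(3)`. -/
noncomputable def o3Mat (g : O3) : Matrix (Fin 3) (Fin 3) ℝ := (g : Matrix (Fin 3) (Fin 3) ℝ)



noncomputable def rotM (θ : ℝ) : Matrix (Fin 3) (Fin 3) ℝ :=
  !![Real.cos θ, -Real.sin θ, 0; Real.sin θ, Real.cos θ, 0; 0, 0, 1]

def sigM : Matrix (Fin 3) (Fin 3) ℝ := !![1, 0, 0; 0, 1, 0; 0, 0, -1]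

lemma transpose_fin_three {α : Type*} (a b c d e f g h i : α) :
    (!![a, b, c; d, e, f; g, h, i])ᵀ = !![a, d, g; b, e, h; c, f, i] := by
  ext i j
  fin_cases i <;> fin_cases j <;> rfl

lemma rotM_mul (a b : ℝ) : rotM a * rotM b = rotM (a + b) := by
  simp only [rotM, Matrix.mul_fin_three]
  rw [Real.cos_add, Real.sin_add]
  refine congrArg Matrix.of ?_
  refine Matrix.vec3_eq ?_ ?_ ?_ <;> refine Matrix.vec3_eq ?_ ?_ ?_ <;> ring

lemma rotM_zero : rotM 0 = 1 := by
  rw [rotM, Matrix.one_fin_three]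
  refine congrArg Matrix.of ?_
  refine Matrix.vec3_eq ?_ ?_ ?_ <;> refine Matrix.vec3_eq ?_ ?_ ?_ <;> norm_num

lemma rotM_pow (θ : ℝ) (k : ℕ) : rotM θ ^ k = rotM (k * θ) := by
  induction k with
  | zero => simp [rotM_zero]
  | succ k ih => rw [pow_succ, ih, rotM_mul]; push_cast; ring_nf

lemma rotM_star (θ : ℝ) : star (rotM θ) = rotM (-θ) := by
  rw [Matrix.star_eq_conjTranspose, Matrix.conjTranspose_eq_transpose_of_trivial,
    rotM, transpose_fin_three, rotM]
  refine congrArg Matrix.of ?_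
  refine Matrix.vec3_eq ?_ ?_ ?_ <;> refine Matrix.vec3_eq ?_ ?_ ?_ <;>
    simp [Real.cos_neg, Real.sin_neg]

lemma rotM_mem (θ : ℝ) : rotM θ ∈ Matrix.orthogonalGroup (Fin 3) ℝ := by
  rw [Matrix.mem_orthogonalGroup_iff, ← Matrix.conjTranspose_eq_transpose_of_trivial,
    ← Matrix.star_eq_conjTranspose, rotM_star, rotM_mul, add_neg_cancel, rotM_zero]

lemma sigM_star : star sigM = sigM := by
  rw [Matrix.star_eq_conjTranspose, Matrix.conjTranspose_eq_transpose_of_trivial,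
    sigM, transpose_fin_three]

lemma sigM_mul_self : sigM * sigM = 1 := by
  rw [sigM, Matrix.mul_fin_three, Matrix.one_fin_three]
  refine congrArg Matrix.of ?_
  refine Matrix.vec3_eq ?_ ?_ ?_ <;> refine Matrix.vec3_eq ?_ ?_ ?_ <;> norm_num

lemma sigM_mem : sigM ∈ Matrix.orthogonalGroup (Fin 3) ℝ := by
  rw [Matrix.mem_orthogonalGroup_iff, ← Matrix.conjTranspose_eq_transpose_of_trivial,
    ← Matrix.star_eq_conjTranspose, sigM_star, sigM_mul_self]

lemma negone_mem : (-1 : Matrix (Fin 3) (Fin 3) ℝ) ∈ Matrix.orthogonalGroup (Fin 3) ℝ := by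
  rw [Matrix.mem_orthogonalGroup_iff]
  simp

lemma rotM_det (θ : ℝ) : (rotM θ).det = 1 := by
  simp [rotM, Matrix.det_fin_three]
  nlinarith [Real.sin_sq_add_cos_sq θ]

lemma sigM_det : sigM.det = -1 := by
  simp [sigM, Matrix.det_fin_three]

lemma sigM_rotM_comm (θ : ℝ) : sigM * rotM θ = rotM θ * sigM := by
  simp only [sigM, rotM, Matrix.mul_fin_three]
  refine congrArg Matrix.of ?_
  refine Matrix.vec3_eq ?_ ?_ ?_ <;> refine Matrix.vec3_eq ?_ ?_ ?_ <;> ring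

local notation "E3" => EuclideanSpace ℝ (Fin 3)

lemma mulVec_fin3 (a b c d e f g h i : ℝ) (v : Fin 3 → ℝ) :
    !![a,b,c;d,e,f;g,h,i] *ᵥ v =
      ![a*v 0 + b*v 1 + c*v 2, d*v 0 + e*v 1 + f*v 2, g*v 0 + h*v 1 + i*v 2] := by
  funext k
  fin_cases k <;> simp [Matrix.mulVec, dotProduct, Fin.sum_univ_three]

lemma coords_of_fix {M : Matrix (Fin 3) (Fin 3) ℝ} {x : E3}
    (hfix : Matrix.toEuclideanLin M x = x) :
    M *ᵥ (WithLp.equiv 2 (Fin 3 → ℝ)) x = (WithLp.equiv 2 (Fin 3 → ℝ)) x := by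
  have := congrArg (WithLp.equiv 2 (Fin 3 → ℝ)) hfix
  exact this

lemma sum_sq_of_norm_one {x : E3} (hx : ‖x‖ = 1) :
    (x 0)^2 + (x 1)^2 + (x 2)^2 = 1 := by
  have h := congrArg (· ^ 2) hx
  simp only [EuclideanSpace.norm_eq] at h
  rw [Real.sq_sqrt (by positivity)] at h
  simpa [Fin.sum_univ_three, Real.norm_eq_abs, sq_abs] using h

/-- the rotatory reflection with angle `b` -/
noncomputable def refM (b : ℝ) : Matrix (Fin 3) (Fin 3) ℝ := rotM b * sigM

lemma refM_eq (b : ℝ) : refM b = !![Real.cos b, -Real.sin b, 0;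
    Real.sin b, Real.cos b, 0; 0, 0, -1] := by
  simp only [refM, rotM, sigM, Matrix.mul_fin_three]
  refine congrArg Matrix.of ?_
  refine Matrix.vec3_eq ?_ ?_ ?_ <;> refine Matrix.vec3_eq ?_ ?_ ?_ <;> ring

lemma neg_rotM (a : ℝ) : rotM a * (-1) = refM (a + π) := by
  rw [refM_eq, Real.cos_add_pi, Real.sin_add_pi, mul_neg_one]
  have : -rotM a = !![-Real.cos a, -(-Real.sin a), 0; -Real.sin a, -Real.cos a, 0; 0,0,-1] := by
    rw [rotM]
    ext i j
    fin_cases i <;> fin_cases j <;> simp [Matrix.neg_apply]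
  rw [this]

lemma fix_rotM {b : ℝ} (hb : Real.cos b ≠ 1) {x : E3} (hx : ‖x‖ = 1)
    (hfix : Matrix.toEuclideanLin (rotM b) x = x) :
    x = EuclideanSpace.single (2 : Fin 3) (1:ℝ) ∨
      x = -EuclideanSpace.single (2 : Fin 3) (1:ℝ) := by
  have h := coords_of_fix hfix
  rw [rotM, mulVec_fin3] at h
  have h0 := congrFun h 0
  have h1 := congrFun h 1
  simp only [Matrix.cons_val_zero, Matrix.cons_val_one, Matrix.head_cons] at h0 h1
  set c := Real.cos b
  set s := Real.sin b
  have hcs : (c - 1)^2 + s^2 ≠ 0 := by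
    have := Real.sin_sq_add_cos_sq b
    intro hh
    apply hb
    nlinarith
  have e0 : (c - 1) * (x 0) - s * (x 1) = 0 := by
    have : c * x 0 + -s * x 1 + 0 * x 2 = x 0 := h0
    linarith [this]
  have e1 : s * (x 0) + (c - 1) * (x 1) = 0 := by
    have : s * x 0 + c * x 1 + 0 * x 2 = x 1 := h1
    linarith [this]
  have hx0 : x 0 = 0 := by
    have : ((c-1)^2 + s^2) * x 0 = 0 := by linear_combination (c-1) * e0 + s * e1
    exact (mul_eq_zero.mp this).resolve_left hcs
  have hx1 : x 1 = 0 := by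
    have : ((c-1)^2 + s^2) * x 1 = 0 := by linear_combination (c-1) * e1 - s * e0
    exact (mul_eq_zero.mp this).resolve_left hcs
  have hsum := sum_sq_of_norm_one hx
  rw [hx0, hx1] at hsum
  have hx2 : x 2 = 1 ∨ x 2 = -1 := by
    have : (x 2 - 1) * (x 2 + 1) = 0 := by nlinarith
    rcases mul_eq_zero.mp this with h | h
    · left; linarith
    · right; linarith
  rcases hx2 with h2 | h2
  · left
    ext i
    fin_cases i <;> simp [EuclideanSpace.single_apply, hx0, hx1, h2]
  · right
    ext i
    fin_cases i <;> simp [EuclideanSpace.single_apply, hx0, hx1, h2]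

lemma fix_refM {b : ℝ} (hb : Real.cos b ≠ 1) {x : E3} (hx : ‖x‖ = 1)
    (hfix : Matrix.toEuclideanLin (refM b) x = x) : False := by
  have h := coords_of_fix hfix
  rw [refM_eq, mulVec_fin3] at h
  have h0 := congrFun h 0
  have h1 := congrFun h 1
  have h2 := congrFun h 2
  simp only [Matrix.cons_val_zero, Matrix.cons_val_one, Matrix.head_cons] at h0 h1 h2
  set c := Real.cos b
  set s := Real.sin b
  have hcs : (c - 1)^2 + s^2 ≠ 0 := by
    have := Real.sin_sq_add_cos_sq b
    intro hh
    apply hb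
    nlinarith
  have e0 : (c - 1) * (x 0) - s * (x 1) = 0 := by
    have : c * x 0 + -s * x 1 + 0 * x 2 = x 0 := h0
    linarith [this]
  have e1 : s * (x 0) + (c - 1) * (x 1) = 0 := by
    have : s * x 0 + c * x 1 + 0 * x 2 = x 1 := h1
    linarith [this]
  have hx0 : x 0 = 0 := by
    have : ((c-1)^2 + s^2) * x 0 = 0 := by linear_combination (c-1) * e0 + s * e1
    exact (mul_eq_zero.mp this).resolve_left hcs
  have hx1 : x 1 = 0 := by
    have : ((c-1)^2 + s^2) * x 1 = 0 := by linear_combination (c-1) * e1 - s * e0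
    exact (mul_eq_zero.mp this).resolve_left hcs
  have hx2 : x 2 = 0 := by
    have : (0:ℝ) * x 0 + 0 * x 1 + -1 * x 2 = x 2 := h2
    linarith [this]
  have hsum := sum_sq_of_norm_one hx
  rw [hx0, hx1, hx2] at hsum
  norm_num at hsum

lemma pow_mod_eq {G : Type*} [Monoid G] (g : G) {n : ℕ} (h : g ^ n = 1) (m : ℕ) :
    g ^ (m % n) = g ^ m := by
  conv_rhs => rw [← Nat.div_add_mod m n]
  rw [pow_add, pow_mul, h, one_pow, one_mul]

/-- the homomorphism `ZMod n →* G` sending `1` to an element `g` with `g ^ n = 1`. -/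
def homOfPow {G : Type*} [Monoid G] {n : ℕ} [NeZero n] (g : G) (h : g ^ n = 1) :
    Multiplicative (ZMod n) →* G where
  toFun k := g ^ (Multiplicative.toAdd k).val
  map_one' := by
    show g ^ (Multiplicative.toAdd (1 : Multiplicative (ZMod n))).val = 1
    rw [toAdd_one, ZMod.val_zero, pow_zero]
  map_mul' a b := by
    show g ^ (Multiplicative.toAdd (a * b)).val = _
    rw [toAdd_mul, ZMod.val_add, pow_mod_eq _ h, pow_add]

lemma homOfPow_apply {G : Type*} [Monoid G] {n : ℕ} [NeZero n] (g : G) (h : g ^ n = 1)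
    (k : Multiplicative (ZMod n)) : homOfPow g h k = g ^ (Multiplicative.toAdd k).val := rfl

lemma cos_angle_ne_one {n a : ℕ} (hn : 0 < n) (h0 : 0 < a) (han : a < n) :
    Real.cos (a * (2 * π / n)) ≠ 1 := by
  intro h
  obtain ⟨m, hm⟩ := (Real.cos_eq_one_iff _).mp h
  have hπ := Real.pi_pos
  have hn' : (0:ℝ) < n := by exact_mod_cast hn
  have h2 : (m : ℝ) * n = a := by
    field_simp at hm
    nlinarith [hm]
  have h3 : m * (n : ℤ) = a := by exact_mod_cast h2
  have hdvd : (n : ℤ) ∣ (a : ℤ) := ⟨m, by linarith [h3]⟩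
  have : n ∣ a := by exact_mod_cast hdvd
  have := Nat.le_of_dvd h0 this
  omega

lemma rotM_two_pi : rotM (2 * π) = 1 := by
  rw [rotM, Matrix.one_fin_three]
  refine congrArg Matrix.of ?_
  refine Matrix.vec3_eq ?_ ?_ ?_ <;> refine Matrix.vec3_eq ?_ ?_ ?_ <;>
    norm_num [Real.cos_two_pi, Real.sin_two_pi]

noncomputable def cE (n : ℕ) : O3 × O3 :=
  (⟨rotM (2 * π / n), rotM_mem _⟩, ⟨rotM (2 * π / n), rotM_mem _⟩)

noncomputable def dE : O3 × O3 := (⟨-1, negone_mem⟩, ⟨sigM, sigM_mem⟩)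

lemma cE_pow_coe_fst (n k : ℕ) :
    (((cE n ^ k).1 : O3) : Matrix (Fin 3) (Fin 3) ℝ) = rotM (k * (2 * π / n)) := by
  rw [Prod.pow_fst, cE]
  rw [SubmonoidClass.coe_pow, rotM_pow]

lemma cE_pow_coe_snd (n k : ℕ) :
    (((cE n ^ k).2 : O3) : Matrix (Fin 3) (Fin 3) ℝ) = rotM (k * (2 * π / n)) := by
  rw [Prod.pow_snd, cE]
  rw [SubmonoidClass.coe_pow, rotM_pow]

lemma cE_pow_n (n : ℕ) (hn : 0 < n) : cE n ^ n = 1 := by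
  have hn' : (n : ℝ) ≠ 0 := by positivity
  have key : (n : ℝ) * (2 * π / n) = 2 * π := by field_simp
  refine Prod.ext ?_ ?_ <;> apply Subtype.ext
  · rw [cE_pow_coe_fst, key, rotM_two_pi]; rfl
  · rw [cE_pow_coe_snd, key, rotM_two_pi]; rfl

lemma dE_sq : dE ^ 2 = 1 := by
  refine Prod.ext ?_ ?_ <;> apply Subtype.ext
  · rw [Prod.pow_fst, dE, SubmonoidClass.coe_pow]
    simp
  · rw [Prod.pow_snd, dE, SubmonoidClass.coe_pow]
    rw [pow_two, sigM_mul_self]; rfl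

lemma cE_dE_comm (n : ℕ) : Commute (cE n) dE := by
  refine Prod.ext ?_ ?_ <;> apply Subtype.ext <;>
    simp only [Prod.fst_mul, Prod.snd_mul, MulMemClass.coe_mul, cE, dE]
  · rw [mul_neg_one, neg_one_mul]
  · exact (sigM_rotM_comm _).symm

lemma refM_22 (b : ℝ) : refM b 2 2 = -1 := by rw [refM_eq]; rfl

lemma rotM_00 (b : ℝ) : rotM b 0 0 = Real.cos b := by rw [rotM]; rfl

/-- For every positive integer `n` there is a finite subgroup `G` of `O(3) × O(3)`,
with `det(g)·det(h) = 1` for all `(g,h) ∈ G`, not contained in `SO(3) × SO(3)`,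
isomorphic to `ℤ/n × ℤ/2`, whose componentwise action on `S² × S²` is pseudofree. -/
theorem exists_pseudofree_nonSO_subgroup_zmod_prod_zmod_two (n : ℕ) (hn : 0 < n) :
    ∃ G : Subgroup (O3 × O3),
      Finite G ∧
      (∀ g ∈ G, (o3Mat g.1).det * (o3Mat g.2).det = 1) ∧
      ¬ G ≤ SO3.prod SO3 ∧
      Nonempty (G ≃* Multiplicative (ZMod n) × Multiplicative (ZMod 2)) ∧
      (∀ g : O3 × O3, g ∈ G → g ≠ 1 →
        {p : EuclideanSpace ℝ (Fin 3) × EuclideanSpace ℝ (Fin 3) |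
          ‖p.1‖ = 1 ∧ ‖p.2‖ = 1 ∧
          Matrix.toEuclideanLin (o3Mat g.1) p.1 = p.1 ∧
          Matrix.toEuclideanLin (o3Mat g.2) p.2 = p.2}.Finite) := by
  haveI : NeZero n := ⟨hn.ne'⟩
  have hc : cE n ^ n = 1 := cE_pow_n n hn
  have hd : dE ^ 2 = 1 := dE_sq
  have comm : ∀ (a : Multiplicative (ZMod n)) (b : Multiplicative (ZMod 2)),
      Commute (homOfPow (cE n) hc a) (homOfPow dE hd b) := fun a b =>
    (cE_dE_comm n).pow_pow _ _
  set φ : Multiplicative (ZMod n) × Multiplicative (ZMod 2) →* O3 × O3 :=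
    MonoidHom.noncommCoprod (homOfPow (cE n) hc) (homOfPow dE hd) comm with hφ
  have φ_apply : ∀ k j, φ (k, j) =
      cE n ^ (Multiplicative.toAdd k).val * dE ^ (Multiplicative.toAdd j).val :=
    fun _ _ => rfl
  have key1 : ∀ (a b : ℕ), o3Mat ((cE n ^ a * dE ^ b).1) =
      rotM (a * (2 * π / n)) * (-1) ^ b := by
    intro a b
    rw [o3Mat, Prod.fst_mul, MulMemClass.coe_mul, cE_pow_coe_fst]
    congr 1
  have key2 : ∀ (a b : ℕ), o3Mat ((cE n ^ a * dE ^ b).2) =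
      rotM (a * (2 * π / n)) * sigM ^ b := by
    intro a b
    rw [o3Mat, Prod.snd_mul, MulMemClass.coe_mul, cE_pow_coe_snd]
    congr 1
  have hinj : Function.Injective φ := by
    rw [injective_iff_map_eq_one]
    rintro ⟨k, j⟩ hkj
    set a := (Multiplicative.toAdd k).val with ha
    set b := (Multiplicative.toAdd j).val with hb
    have hM2 : rotM (a * (2 * π / n)) * sigM ^ b = 1 := by
      rw [← key2 a b, ← φ_apply, hkj, o3Mat]
      rfl
    have hb2 : b < 2 := ZMod.val_lt _
    have hbcases : b = 0 ∨ b = 1 := by omega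
    rcases hbcases with hb0 | hb1
    · rw [hb0, pow_zero, mul_one] at hM2
      have hcos : Real.cos (a * (2 * π / n)) = 1 := by
        have := congrArg (fun M : Matrix (Fin 3) (Fin 3) ℝ => M 0 0) hM2
        simpa [rotM_00, Matrix.one_apply] using this
      have ha0 : a = 0 := by
        by_contra h
        exact cos_angle_ne_one hn (Nat.pos_of_ne_zero h) (ZMod.val_lt _) hcos
      have hk : k = 1 := by
        have : (Multiplicative.toAdd k) = 0 := by
          rwa [← ZMod.val_eq_zero]
        simpa using this
      have hj : j = 1 := by
        have : (Multiplicative.toAdd j) = 0 := by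
          rw [← ZMod.val_eq_zero, ← hb, hb0]
        simpa using this
      rw [hk, hj]
      rfl
    · exfalso
      rw [hb1, pow_one] at hM2
      have := congrArg (fun M : Matrix (Fin 3) (Fin 3) ℝ => M 2 2) hM2
      rw [show rotM (a * (2 * π / n)) * sigM = refM (a * (2 * π / n)) from rfl] at this
      simp only [refM_22, Matrix.one_apply_eq] at this
      norm_num at this
  refine ⟨φ.range, ?_, ?_, ?_, ?_, ?_⟩
  · exact Finite.of_surjective φ.rangeRestrict φ.rangeRestrict_surjective
  · rintro g ⟨⟨k, j⟩, rfl⟩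
    rw [φ_apply, key1, key2, Matrix.det_mul, Matrix.det_mul, rotM_det, one_mul, one_mul,
      Matrix.det_pow, Matrix.det_pow, sigM_det]
    have hdetneg : (-1 : Matrix (Fin 3) (Fin 3) ℝ).det = -1 := by
      rw [show (-1 : Matrix (Fin 3) (Fin 3) ℝ) = -(1 : Matrix (Fin 3) (Fin 3) ℝ) from rfl,
        Matrix.det_neg]
      norm_num
    rw [hdetneg, ← mul_pow]
    norm_num
  · intro hle
    have hdmem : dE ∈ φ.range := by
      refine ⟨(1, Multiplicative.ofAdd 1), ?_⟩
      rw [φ_apply]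
      have h1 : (Multiplicative.toAdd (1 : Multiplicative (ZMod n))).val = 0 := by
        simp [ZMod.val_zero]
      have h2 : (Multiplicative.toAdd (Multiplicative.ofAdd (1 : ZMod 2))).val = 1 := rfl
      rw [h1, h2, pow_zero, one_mul, pow_one]
    have hmem := (Subgroup.mem_prod.mp (hle hdmem)).1
    have hdet : ((dE.1 : O3) : Matrix (Fin 3) (Fin 3) ℝ).det = 1 := hmem
    rw [show ((dE.1 : O3) : Matrix (Fin 3) (Fin 3) ℝ) = -1 from rfl] at hdet
    rw [show (-1 : Matrix (Fin 3) (Fin 3) ℝ) = -(1 : Matrix (Fin 3) (Fin 3) ℝ) from rfl,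
      Matrix.det_neg] at hdet
    simp at hdet
    norm_num at hdet
  · exact ⟨(MonoidHom.ofInjective hinj).symm⟩
  · rintro g ⟨⟨k, j⟩, rfl⟩ hg1
    set a := (Multiplicative.toAdd k).val with ha
    set b := (Multiplicative.toAdd j).val with hb
    have hb2 : b < 2 := ZMod.val_lt _
    have hban : a < n := ZMod.val_lt _
    have hbcases : b = 0 ∨ b = 1 := by omega
    rcases hbcases with hb0 | hb1
    · -- rotation case: both components are rotations with nontrivial angle
      have ha0 : a ≠ 0 := by
        intro h
        apply hg1
        rw [φ_apply, ← ha, ← hb, h, hb0, pow_zero, pow_zero, one_mul]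
      have hcos : Real.cos (a * (2 * π / n)) ≠ 1 :=
        cos_angle_ne_one hn (Nat.pos_of_ne_zero ha0) hban
      set s3 : E3 := EuclideanSpace.single (2 : Fin 3) (1 : ℝ) with hs3
      have hfin : ({s3, -s3} : Set E3).Finite := (Set.finite_singleton _).insert _
      apply Set.Finite.subset (hfin.prod hfin)
      rintro ⟨x, y⟩ ⟨hx, hy, hfx, hfy⟩
      rw [φ_apply, ← ha, ← hb, hb0] at hfx hfy
      rw [key1] at hfx
      rw [key2] at hfy
      rw [pow_zero, mul_one] at hfx hfy
      exact ⟨fix_rotM hcos hx hfx, fix_rotM hcos hy hfy⟩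
    · -- reflection case: one of the components has empty fixed set
      apply Set.Finite.subset Set.finite_empty
      rintro ⟨x, y⟩ ⟨hx, hy, hfx, hfy⟩
      rw [φ_apply, ← ha, ← hb, hb1] at hfx hfy
      rw [key1] at hfx
      rw [key2] at hfy
      rw [pow_one] at hfx hfy
      rw [neg_rotM] at hfx
      rw [show rotM (a * (2 * π / n)) * sigM = refM (a * (2 * π / n)) from rfl] at hfy
      by_cases hcc : Real.cos (a * (2 * π / n) + π) = 1
      · have hc2 : Real.cos (a * (2 * π / n)) ≠ 1 := by
          rw [Real.cos_add_pi] at hcc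
          intro h
          rw [h] at hcc
          norm_num at hcc
        exact (fix_refM hc2 hy hfy).elim
      · exact (fix_refM hcc hx hfx).elim
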